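/- If the finite abelian group Z_{n1} ⊕ ··· ⊕ Z_{ns} (with all n_i > 1) has minimal spectrum, then n1 = n2 = ··· = ns. -/
import Mathlib


structure MSignature where
  ops : Type
  arity : ops → ℕ

inductive MTerm (σ : MSignature) (k : ℕ) : Type where
  | var : Fin k → MTerm σ k
  | app : (f : σ.ops) → (Fin (σ.arity f) → MTerm σ k) → MTerm σ k

def MTerm.eval {σ : MSignature} {A : Type*}
    (interp : (f : σ.ops) → (Fin (σ.arity f) → A) → A) {k : ℕ} :
    MTerm σ k → (Fin k → A) → A
  | .var i, x => x i
  | .app f ts, x => interp f fun i => (ts i).eval interp x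

/-- Probability of the equation `t ≈ t'` in the algebra `(A, interp)`. -/
noncomputable def eqProb {σ : MSignature} (A : Type*)
    (interp : (f : σ.ops) → (Fin (σ.arity f) → A) → A) {k : ℕ}
    (t t' : MTerm σ k) : ℚ :=
  (Nat.card {x : Fin k → A // t.eval interp x = t'.eval interp x} : ℚ) /
    (Nat.card A : ℚ) ^ k

/-- The equational probability spectrum of the algebra `(A, interp)`. -/
noncomputable def PSpecA {σ : MSignature} (A : Type*)
    (interp : (f : σ.ops) → (Fin (σ.arity f) → A) → A) : Set ℚ :=
  { q | ∃ (k : ℕ) (t t' : MTerm σ k), q = eqProb A interp t t' }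

/-- `(A, interp)` has minimal spectrum: every equation has probability `1` or `1/|A|`. -/
def MinimalSpectrum {σ : MSignature} (A : Type*)
    (interp : (f : σ.ops) → (Fin (σ.arity f) → A) → A) : Prop :=
  ∀ (k : ℕ) (t t' : MTerm σ k),
    eqProb A interp t t' = 1 ∨ eqProb A interp t t' = 1 / (Nat.card A : ℚ)

/-- The signature of groupoids: one binary operation. -/
@[reducible] def grpdSig : MSignature := ⟨Unit, fun _ => 2⟩

def grpdInterp {A : Type*} (mul : A → A → A) :
    (f : grpdSig.ops) → (Fin (grpdSig.arity f) → A) → A :=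
  fun _ x => mul (x 0) (x 1)

/-- A permutation is isocyclic if it is the identity or has cycle type `(1, a, …, a)`. -/
def IsIsocyclic {A : Type*} (f : A → A) : Prop :=
  Function.Bijective f ∧
    (f = id ∨ ∃ a, 1 < a ∧ (∃! x, f x = x) ∧
      ∀ x, f x ≠ x → Function.minimalPeriod f x = a)

inductive GroupOp | one | inv | mul

@[reducible] def groupSig : MSignature :=
  ⟨GroupOp, fun f => match f with | .one => 0 | .inv => 1 | .mul => 2⟩

def groupInterp (G : Type*) [Group G] :
    (f : groupSig.ops) → (Fin (groupSig.arity f) → G) → G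
  | .one, _ => 1
  | .inv, x => (x 0)⁻¹
  | .mul, x => x 0 * x 1


private def powTerm : ℕ → MTerm groupSig 1
  | 0 => .app .one Fin.elim0
  | k+1 => .app .mul ![powTerm k, .var 0]

private lemma powTerm_eval {G : Type*} [Group G] (k : ℕ) (x : Fin 1 → G) :
    (powTerm k).eval (groupInterp G) x = x 0 ^ k := by
  induction k with
  | zero => simp [powTerm, MTerm.eval, groupInterp]
  | succ k ih => simp [powTerm, MTerm.eval, groupInterp, ih, pow_succ]

theorem stmt12 (s : ℕ) (n : Fin s → ℕ) (hn : ∀ i, 1 < n i)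
    (hmin : MinimalSpectrum (Multiplicative (∀ i, ZMod (n i)))
      (groupInterp (Multiplicative (∀ i, ZMod (n i))))) :
    ∀ i j, n i = n j := by
  classical
  haveI : ∀ k, NeZero (n k) := fun k => ⟨by have := hn k; omega⟩
  have key : ∀ i j : Fin s, n i < n j → False := by
    intro i j hij
    have hi2 := hn i
    set A := ∀ k, ZMod (n k) with hA
    set a := n i with ha
    have e1 : {x : Fin 1 → Multiplicative A //
        (powTerm a).eval (groupInterp (Multiplicative A)) x
        = (MTerm.app .one Fin.elim0 : MTerm groupSig 1).eval
            (groupInterp (Multiplicative A)) x}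
        ≃ {y : A // a • y = 0} := by
      refine ((Equiv.funUnique (Fin 1) (Multiplicative A)).subtypeEquiv
          (q := fun g => g ^ a = 1) (fun x => ?_)).trans
        (Multiplicative.toAdd.subtypeEquiv
          (q := fun y => a • y = 0) (fun g => ?_))
      · rw [powTerm_eval]
        show x 0 ^ a = 1 ↔ (x default) ^ a = 1
        rfl
      · show g ^ a = 1 ↔ a • Multiplicative.toAdd g = 0
        rw [← toAdd_pow]
        exact ⟨fun h => by rw [h]; rfl, fun h => Multiplicative.toAdd.injective h⟩
    have hcard : Nat.card {x : Fin 1 → Multiplicative A //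
        (powTerm a).eval (groupInterp (Multiplicative A)) x
        = (MTerm.app .one Fin.elim0 : MTerm groupSig 1).eval
            (groupInterp (Multiplicative A)) x}
        = Nat.card {y : A // a • y = 0} := Nat.card_congr e1
    -- lower bound
    have hlow : n i ≤ Nat.card {y : A // a • y = 0} := by
      have hinj : Function.Injective (fun z : ZMod (n i) =>
          (⟨Pi.single i z, by
            rw [← Pi.single_smul,
              show a • z = 0 from by rw [nsmul_eq_mul, ha, ZMod.natCast_self, zero_mul],
              Pi.single_zero]⟩ : {y : A // a • y = 0})) := by
        intro z w h
        have h2 := congrFun (congrArg Subtype.val h) i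
        dsimp only at h2
        rwa [Pi.single_eq_same, Pi.single_eq_same] at h2
      calc n i = Nat.card (ZMod (n i)) := (Nat.card_zmod _).symm
        _ ≤ _ := Nat.card_le_card_of_injective _ hinj
    -- upper bound
    have hup : Nat.card {y : A // a • y = 0} < Nat.card A := by
      have hnot : ¬ a • (Pi.single j (1 : ZMod (n j)) : A) = 0 := by
        intro h
        have := congrArg (fun y => y j) h
        simp only [Pi.smul_apply, Pi.single_eq_same, Pi.zero_apply] at this
        rw [nsmul_eq_mul, mul_one, ZMod.natCast_eq_zero_iff] at this
        exact absurd (Nat.le_of_dvd (by omega) this) (by omega)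
      rw [Nat.card_eq_fintype_card, Nat.card_eq_fintype_card]
      exact Fintype.card_subtype_lt (x := Pi.single j 1) hnot
    have hNA : Nat.card (Multiplicative A) = Nat.card A :=
      Nat.card_congr Multiplicative.toAdd
    have hApos : 0 < Nat.card A := Nat.card_pos
    have Nq : (Nat.card A : ℚ) ≠ 0 := Nat.cast_ne_zero.mpr hApos.ne'
    rcases hmin 1 (powTerm a) (MTerm.app .one Fin.elim0) with h1 | h1 <;>
      rw [eqProb, hcard, hNA, pow_one] at h1
    · rw [div_eq_one_iff_eq Nq] at h1
      have : Nat.card {y : A // a • y = 0} = Nat.card A := by exact_mod_cast h1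
      omega
    · rw [div_eq_div_iff Nq Nq ] at h1
      have h2 : (Nat.card {y : A // a • y = 0} : ℚ) = 1 := mul_right_cancel₀ Nq h1
      have : Nat.card {y : A // a • y = 0} = 1 := by exact_mod_cast h2
      omega
  intro i j
  by_contra h
  rcases Nat.lt_or_ge (n i) (n j) with h' | h'
  · exact key i j h'
  · exact key j i (lt_of_le_of_ne h' (Ne.symm h))
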